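/- arXiv:2012.02928 — 6 statements merged into one kernel-verified Lean document; each statement's English description precedes it below -/
import Mathlib

section
/- Let K and M be closed subspaces of a complex Hilbert space E. Then com(K, M) = {ψ ∈ E | P_K (P_M ψ) = P_M (P_K ψ)}, i.e. the commutator com(K, M) coincides with the kernel of the operator commutator P_K ∘ P_M − P_M ∘ P_K. -/
/-!
Write `K⁺ = K`, `K⁻ = Kᗮ`. Since `P_Kᗮ = 1 - P_K`, the projections `P_K` and `P_M` commute at `ψ`
iff `P_{K^±}` and `P_{M^±}` do, for any choice of signs. On `K ⊓ M` both projections are the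
identity, so each of the four pieces of `com(K, M)` consists of commuting vectors. Conversely
`ψ = Σ P_{K^±} P_{M^±} ψ`, and if the projections commute at `ψ` then `P_{K^±} P_{M^±} ψ` lies in
`K^± ⊓ M^±`.
-/

variable {E : Type*} [NormedAddCommGroup E] [InnerProductSpace ℂ E] [CompleteSpace E]

/-- Orthogonal projection onto (the topological closure of) a submodule, as a
continuous linear operator on `E`. For a closed subspace `K` this is the
orthogonal projection `P_K` onto `K` itself. -/
noncomputable def proj (K : Submodule ℂ E) : E →L[ℂ] E :=
  K.topologicalClosure.subtypeL.comp (Submodule.orthogonalProjectionOnto K.topologicalClosure)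


/-- The commutator `com(K, M)` of two subspaces. -/
noncomputable def com (K M : Submodule ℂ E) : Submodule ℂ E :=
  (K ⊓ M) ⊔ (K ⊓ Mᗮ) ⊔ (Kᗮ ⊓ M) ⊔ (Kᗮ ⊓ Mᗮ)

namespace Submodule

variable {𝕜 F : Type*} [RCLike 𝕜] [NormedAddCommGroup F] [InnerProductSpace 𝕜 F]
  {K M : Submodule 𝕜 F} [K.HasOrthogonalProjection] [M.HasOrthogonalProjection]

theorem starProjection_comm_orthogonal_left_iff {x : F} :
    Kᗮ.starProjection (M.starProjection x) = M.starProjection (Kᗮ.starProjection x) ↔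
      K.starProjection (M.starProjection x) = M.starProjection (K.starProjection x) := by
  simp only [starProjection_orthogonal_val, map_sub, sub_right_inj]

theorem starProjection_comm_orthogonal_right_iff {x : F} :
    K.starProjection (Mᗮ.starProjection x) = Mᗮ.starProjection (K.starProjection x) ↔
      K.starProjection (M.starProjection x) = M.starProjection (K.starProjection x) := by
  rw [eq_comm, starProjection_comm_orthogonal_left_iff, eq_comm]

theorem starProjection_comm_of_mem_inf {x : F} (hx : x ∈ K ⊓ M) :
    K.starProjection (M.starProjection x) = M.starProjection (K.starProjection x) := by
  rw [starProjection_eq_self_iff.mpr hx.2, starProjection_eq_self_iff.mpr hx.1,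
    starProjection_eq_self_iff.mpr hx.2]

theorem starProjection_starProjection_mem_inf_of_comm {x : F}
    (h : K.starProjection (M.starProjection x) = M.starProjection (K.starProjection x)) :
    K.starProjection (M.starProjection x) ∈ K ⊓ M :=
  ⟨K.starProjection_apply_mem _, h ▸ M.starProjection_apply_mem _⟩

theorem starProjection_starProjection_add_orthogonal (x : F) :
    K.starProjection (M.starProjection x) + K.starProjection (Mᗮ.starProjection x) +
      Kᗮ.starProjection (M.starProjection x) + Kᗮ.starProjection (Mᗮ.starProjection x) = x := by
  simp only [starProjection_orthogonal_val, map_sub]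
  abel

theorem mem_ker_lie_starProjection_iff {x : F} :
    x ∈ LinearMap.ker (⁅K.starProjection, M.starProjection⁆ : F →L[𝕜] F).toLinearMap ↔
      K.starProjection (M.starProjection x) = M.starProjection (K.starProjection x) := by
  simp [Ring.lie_def, sub_eq_zero]

theorem sup_inf_orthogonal_le_ker_lie_starProjection :
    (K ⊓ M) ⊔ (K ⊓ Mᗮ) ⊔ (Kᗮ ⊓ M) ⊔ (Kᗮ ⊓ Mᗮ) ≤
      LinearMap.ker (⁅K.starProjection, M.starProjection⁆ : F →L[𝕜] F).toLinearMap := by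
  refine sup_le (sup_le (sup_le ?_ ?_) ?_) ?_ <;> intro x hx <;>
    rw [mem_ker_lie_starProjection_iff]
  · exact starProjection_comm_of_mem_inf hx
  · exact starProjection_comm_orthogonal_right_iff.mp (starProjection_comm_of_mem_inf hx)
  · exact starProjection_comm_orthogonal_left_iff.mp (starProjection_comm_of_mem_inf hx)
  · exact starProjection_comm_orthogonal_left_iff.mp <|
      starProjection_comm_orthogonal_right_iff.mp (starProjection_comm_of_mem_inf hx)

theorem ker_lie_starProjection_le_sup_inf_orthogonal :
    LinearMap.ker (⁅K.starProjection, M.starProjection⁆ : F →L[𝕜] F).toLinearMap ≤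
      (K ⊓ M) ⊔ (K ⊓ Mᗮ) ⊔ (Kᗮ ⊓ M) ⊔ (Kᗮ ⊓ Mᗮ) := by
  intro x hx
  rw [mem_ker_lie_starProjection_iff] at hx
  rw [← starProjection_starProjection_add_orthogonal (K := K) (M := M) x]
  refine add_mem (add_mem (add_mem ?_ ?_) ?_) ?_
  · exact mem_sup_left <| mem_sup_left <| mem_sup_left <|
      starProjection_starProjection_mem_inf_of_comm hx
  · exact mem_sup_left <| mem_sup_left <| mem_sup_right <|
      starProjection_starProjection_mem_inf_of_comm <|
        starProjection_comm_orthogonal_right_iff.mpr hx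
  · exact mem_sup_left <| mem_sup_right <|
      starProjection_starProjection_mem_inf_of_comm <|
        starProjection_comm_orthogonal_left_iff.mpr hx
  · exact mem_sup_right <| starProjection_starProjection_mem_inf_of_comm <|
      starProjection_comm_orthogonal_left_iff.mpr (starProjection_comm_orthogonal_right_iff.mpr hx)

theorem sup_inf_orthogonal_eq_ker_lie_starProjection :
    (K ⊓ M) ⊔ (K ⊓ Mᗮ) ⊔ (Kᗮ ⊓ M) ⊔ (Kᗮ ⊓ Mᗮ) =
      LinearMap.ker (⁅K.starProjection, M.starProjection⁆ : F →L[𝕜] F).toLinearMap :=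
  le_antisymm sup_inf_orthogonal_le_ker_lie_starProjection
    ker_lie_starProjection_le_sup_inf_orthogonal

end Submodule

theorem stmt1 (K M : Submodule ℂ E) (hK : IsClosed (K : Set E)) (hM : IsClosed (M : Set E)) :
    (com K M : Set E) = {ψ : E | proj K (proj M ψ) = proj M (proj K ψ)} := by
  ext ψ
  change ψ ∈ com K M ↔
    K.topologicalClosure.starProjection (M.topologicalClosure.starProjection ψ) =
      M.topologicalClosure.starProjection (K.topologicalClosure.starProjection ψ)
  conv_lhs => rw [← hK.submodule_topologicalClosure_eq, ← hM.submodule_topologicalClosure_eq]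
  rw [com, Submodule.sup_inf_orthogonal_eq_ker_lie_starProjection,
    Submodule.mem_ker_lie_starProjection_iff]
end

section
/- Let K and M be closed subspaces of a complex Hilbert space E. Then the orthogonal projections P_K and P_M commute if and only if com(K, M) = ⊤ (the whole space E). -/
variable {E : Type*} [NormedAddCommGroup E] [InnerProductSpace ℂ E] [CompleteSpace E]

/-!
`P_K` and `P_M` commute exactly when `E` splits into the four pieces `A ⊓ B` with
`A ∈ {K, Kᗮ}`, `B ∈ {M, Mᗮ}`. If they commute, so do `P_Kᗮ = 1 - P_K` and `P_Mᗮ = 1 - P_M`,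
each product `P_A P_B` maps into `A ⊓ B`, and expanding `x = (P_K + P_Kᗮ)(P_M + P_Mᗮ) x`
decomposes every vector. Conversely, every vector of `A ⊓ B` is an eigenvector of both `P_K`
and `P_M`, so the two products agree on each piece, hence on their sum `com K M`.
-/

lemma proj_apply_mem {K : Submodule ℂ E} (hK : IsClosed (K : Set E)) (x : E) : proj K x ∈ K :=
  hK.submodule_topologicalClosure_eq.le (K.topologicalClosure.orthogonalProjectionOnto x).2

lemma sub_proj_apply_mem_orthogonal (K : Submodule ℂ E) (x : E) : x - proj K x ∈ Kᗮ :=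
  Submodule.orthogonal_le K.le_topologicalClosure
    (K.topologicalClosure.sub_starProjection_mem_orthogonal x)

lemma proj_eq_self {K : Submodule ℂ E} {x : E} (hx : x ∈ K) : proj K x = x :=
  congrArg Subtype.val <| Submodule.orthogonalProjectionOnto_mem_subspace_eq_self
    (⟨x, K.le_topologicalClosure hx⟩ : K.topologicalClosure)

lemma proj_eq_zero {K : Submodule ℂ E} {x : E} (hx : x ∈ Kᗮ) : proj K x = 0 := by
  have hx' : x ∈ K.topologicalClosureᗮ :=
    K.orthogonal_orthogonal_eq_closure ▸ Kᗮ.le_orthogonal_orthogonal hx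
  exact congrArg Subtype.val (Submodule.orthogonalProjectionOnto_apply_of_mem_orthogonal hx')

lemma proj_orthogonal {K : Submodule ℂ E} (hK : IsClosed (K : Set E)) :
    proj Kᗮ = 1 - proj K := by
  ext x
  have hx : x = proj K x + (x - proj K x) := by abel
  conv_lhs => rw [hx]
  rw [map_add, proj_eq_zero (K.le_orthogonal_orthogonal (proj_apply_mem hK x)),
    proj_eq_self (sub_proj_apply_mem_orthogonal K x), zero_add]
  rfl

lemma proj_mul_proj_apply_mem_inf {K M : Submodule ℂ E} (hK : IsClosed (K : Set E))
    (hM : IsClosed (M : Set E)) (h : Commute (proj K) (proj M)) (x : E) :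
    (proj K * proj M) x ∈ K ⊓ M :=
  ⟨proj_apply_mem hK _, h.eq ▸ proj_apply_mem hM _⟩

lemma com_eq_top_of_commute {K M : Submodule ℂ E} (hK : IsClosed (K : Set E))
    (hM : IsClosed (M : Set E)) (h : Commute (proj K) (proj M)) : com K M = ⊤ := by
  have hK' := K.isClosed_orthogonal
  have hM' := M.isClosed_orthogonal
  have h₁ : Commute (proj K) (proj Mᗮ) := by
    rw [proj_orthogonal hM]; exact (Commute.one_right _).sub_right h
  have h₂ : Commute (proj Kᗮ) (proj M) := by
    rw [proj_orthogonal hK]; exact (Commute.one_left _).sub_left h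
  have h₃ : Commute (proj Kᗮ) (proj Mᗮ) := by
    rw [proj_orthogonal hM]; exact (Commute.one_right _).sub_right h₂
  refine Submodule.eq_top_iff'.2 fun x => ?_
  have hx : x = (proj K * proj M) x + (proj K * proj Mᗮ) x + (proj Kᗮ * proj M) x
      + (proj Kᗮ * proj Mᗮ) x := by
    simp only [proj_orthogonal hK, proj_orthogonal hM, mul_apply_eq_comp, sub_apply, one_apply_eq_self, map_sub]
    abel
  rw [hx]
  exact Submodule.add_mem_sup (Submodule.add_mem_sup (Submodule.add_mem_sup
    (proj_mul_proj_apply_mem_inf hK hM h x) (proj_mul_proj_apply_mem_inf hK hM' h₁ x))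
    (proj_mul_proj_apply_mem_inf hK' hM h₂ x)) (proj_mul_proj_apply_mem_inf hK' hM' h₃ x)

lemma commute_of_com_eq_top {K M : Submodule ℂ E} (h : com K M = ⊤) :
    Commute (proj K) (proj M) := by
  have hle : com K M ≤ LinearMap.eqLocus ((proj K * proj M : E →L[ℂ] E) : E →ₗ[ℂ] E)
      ((proj M * proj K : E →L[ℂ] E) : E →ₗ[ℂ] E) := by
    refine sup_le (sup_le (sup_le ?_ ?_) ?_) ?_ <;> rintro x ⟨hxK, hxM⟩
    · simp [proj_eq_self hxK, proj_eq_self hxM]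
    · simp [proj_eq_self hxK, proj_eq_zero hxM]
    · simp [proj_eq_zero hxK, proj_eq_self hxM]
    · simp [proj_eq_zero hxK, proj_eq_zero hxM]
  exact ContinuousLinearMap.ext fun x => hle (h ▸ Submodule.mem_top)

theorem stmt2 (K M : Submodule ℂ E) (hK : IsClosed (K : Set E)) (hM : IsClosed (M : Set E)) :
    proj K ∘L proj M = proj M ∘L proj K ↔ com K M = ⊤ :=
  ⟨com_eq_top_of_commute hK hM, commute_of_com_eq_top⟩
end

section
/- Let K and M be closed subspaces of a complex Hilbert space E and let C := com(K, M). Then the orthogonal projections onto K ⊓ C and onto M ⊓ C commute: P_{K ⊓ C} ∘ P_{M ⊓ C} = P_{M ⊓ C} ∘ P_{K ⊓ C}. -/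
variable {E : Type*} [NormedAddCommGroup E] [InnerProductSpace ℂ E] [CompleteSpace E]

/-!
Writing `A = K ⊓ M`, `B = K ⊓ Mᗮ`, `C = Kᗮ ⊓ M`, the modular law cuts the commutator down to
`K ⊓ com K M = A ⊔ B` and `M ⊓ com K M = A ⊔ C`. Since `A`, `B`, `C` are pairwise orthogonal,
`P_{A ⊔ B} = P_A + P_B` and `P_{A ⊔ C} = P_A + P_C`, and expanding the product in either
order leaves only `P_A² = P_A`.
-/

namespace Submodule

theorem inf_sup_eq_of_le_of_le_orthogonal {𝕜 F : Type*} [RCLike 𝕜] [NormedAddCommGroup F]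
    [InnerProductSpace 𝕜 F] {K A D : Submodule 𝕜 F} (hA : A ≤ K)
    (hD : D ≤ Kᗮ) : K ⊓ (A ⊔ D) = A := by
  have hKD : D ⊓ K = ⊥ := eq_bot_iff.mpr <| (inf_le_inf_right K hD).trans_eq <| by
    rw [inf_comm, K.inf_orthogonal_eq_bot]
  rw [inf_comm, sup_inf_assoc_of_le D hA, hKD, sup_bot_eq]

theorem inf_com_left {F : Type*} [NormedAddCommGroup F] [InnerProductSpace ℂ F]
    (K M : Submodule ℂ F) : K ⊓ com K M = (K ⊓ M) ⊔ (K ⊓ Mᗮ) := by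
  rw [com, sup_assoc]
  exact inf_sup_eq_of_le_of_le_orthogonal (sup_le inf_le_left inf_le_left)
    (sup_le inf_le_left inf_le_left)

theorem inf_com_right {F : Type*} [NormedAddCommGroup F] [InnerProductSpace ℂ F]
    (K M : Submodule ℂ F) : M ⊓ com K M = (K ⊓ M) ⊔ (Kᗮ ⊓ M) := by
  rw [com, sup_assoc, sup_sup_sup_comm]
  exact inf_sup_eq_of_le_of_le_orthogonal (sup_le inf_le_right inf_le_right)
    (sup_le inf_le_right inf_le_right)

end Submodule

theorem proj_mem_topologicalClosure (S : Submodule ℂ E) (x : E) :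
    proj S x ∈ S.topologicalClosure :=
  Submodule.coe_mem _

theorem sub_proj_mem_orthogonal (S : Submodule ℂ E) (x : E) : x - proj S x ∈ Sᗮ := by
  rw [← S.orthogonal_closure]
  exact Submodule.sub_starProjection_mem_orthogonal x

theorem proj_apply_eq_of_mem_of_sub_mem_orthogonal {S : Submodule ℂ E} {x p : E}
    (hp : p ∈ S.topologicalClosure) (hxp : x - p ∈ Sᗮ) : proj S x = p :=
  Submodule.eq_starProjection_of_mem_orthogonal hp (S.orthogonal_closure ▸ hxp)

theorem proj_comp_self (S : Submodule ℂ E) : proj S ∘L proj S = proj S :=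
  Submodule.starProjection_comp_starProjection_of_le le_rfl

theorem proj_mem_orthogonal_of_isOrtho {U V : Submodule ℂ E} (h : U ⟂ V) (x : E) :
    proj V x ∈ Uᗮ :=
  V.topologicalClosure_minimal h.ge U.isClosed_orthogonal (proj_mem_topologicalClosure V x)

theorem Submodule.IsOrtho.proj_comp_proj {U V : Submodule ℂ E} (h : U ⟂ V) :
    proj U ∘L proj V = 0 := by
  ext x
  exact proj_apply_eq_of_mem_of_sub_mem_orthogonal (zero_mem _)
    (by simpa using proj_mem_orthogonal_of_isOrtho h x)

theorem Submodule.IsOrtho.proj_sup {U V : Submodule ℂ E} (h : U ⟂ V) :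
    proj (U ⊔ V) = proj U + proj V := by
  ext x
  refine proj_apply_eq_of_mem_of_sub_mem_orthogonal
    (add_mem (topologicalClosure_mono le_sup_left (proj_mem_topologicalClosure U x))
      (topologicalClosure_mono le_sup_right (proj_mem_topologicalClosure V x))) ?_
  rw [add_apply, ← Submodule.inf_orthogonal]
  constructor
  · rw [← sub_sub]
    exact sub_mem (sub_proj_mem_orthogonal U x) (proj_mem_orthogonal_of_isOrtho h x)
  · rw [add_comm, ← sub_sub]
    exact sub_mem (sub_proj_mem_orthogonal V x) (proj_mem_orthogonal_of_isOrtho h.symm x)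

theorem proj_sup_comp_proj_sup {A B C : Submodule ℂ E} (hAB : A ⟂ B) (hAC : A ⟂ C)
    (hBC : B ⟂ C) : proj (A ⊔ B) ∘L proj (A ⊔ C) = proj A := by
  rw [hAB.proj_sup, hAC.proj_sup, ContinuousLinearMap.add_comp, ContinuousLinearMap.comp_add,
    ContinuousLinearMap.comp_add, proj_comp_self, hAC.proj_comp_proj, hAB.symm.proj_comp_proj,
    hBC.proj_comp_proj, add_zero, add_zero, add_zero]

theorem stmt3_general (K M : Submodule ℂ E) :
    proj (K ⊓ com K M) ∘L proj (M ⊓ com K M) = proj (M ⊓ com K M) ∘L proj (K ⊓ com K M) := by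
  have hAB : K ⊓ M ⟂ K ⊓ Mᗮ := M.isOrtho_orthogonal_right.mono inf_le_right inf_le_right
  have hAC : K ⊓ M ⟂ Kᗮ ⊓ M := K.isOrtho_orthogonal_right.mono inf_le_left inf_le_left
  have hBC : K ⊓ Mᗮ ⟂ Kᗮ ⊓ M := K.isOrtho_orthogonal_right.mono inf_le_left inf_le_left
  rw [Submodule.inf_com_left, Submodule.inf_com_right, proj_sup_comp_proj_sup hAB hAC hBC,
    proj_sup_comp_proj_sup hAC hAB hBC.symm]

theorem stmt3 (K M : Submodule ℂ E) (hK : IsClosed (K : Set E)) (hM : IsClosed (M : Set E)) :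
    proj (K ⊓ com K M) ∘L proj (M ⊓ com K M) = proj (M ⊓ com K M) ∘L proj (K ⊓ com K M) :=
  stmt3_general K M
end

section
/- Let K and M be closed subspaces of a complex Hilbert space E. Then the Sasaki arrow satisfies modus tollens (MT): Mᗮ ⊓ (K ⇒ M) ≤ Kᗮ. -/
variable {E : Type*} [NormedAddCommGroup E] [InnerProductSpace ℂ E] [CompleteSpace E]

/-- The Sasaki arrow `K ⇒ M`. -/
noncomputable def sasaki (K M : Submodule ℂ E) : Submodule ℂ E :=
  Kᗮ ⊔ (K ⊓ M)

namespace Submodule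

variable {𝕜 F : Type*} [RCLike 𝕜] [NormedAddCommGroup F] [InnerProductSpace 𝕜 F]

theorem eq_zero_of_add_mem_orthogonal {K M : Submodule 𝕜 F} {a b : F} (ha : a ∈ Kᗮ)
    (hbK : b ∈ K) (hbM : b ∈ M) (hab : a + b ∈ Mᗮ) : b = 0 := by
  have hb_ab : inner 𝕜 b (a + b) = 0 := inner_right_of_mem_orthogonal hbM hab
  have hb_a : inner 𝕜 b a = 0 := inner_right_of_mem_orthogonal hbK ha
  rw [inner_add_right, hb_a, zero_add] at hb_ab
  exact inner_self_eq_zero.mp hb_ab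

theorem orthogonal_inf_orthogonal_sup_inf_le (K M : Submodule 𝕜 F) :
    Mᗮ ⊓ (Kᗮ ⊔ (K ⊓ M)) ≤ Kᗮ := by
  rintro x ⟨hxM, hx⟩
  obtain ⟨a, ha, b, ⟨hbK, hbM⟩, rfl⟩ := mem_sup.mp hx
  rw [eq_zero_of_add_mem_orthogonal ha hbK hbM hxM, add_zero]
  exact ha

end Submodule

theorem stmt6_general (K M : Submodule ℂ E) :
    Mᗮ ⊓ sasaki K M ≤ Kᗮ :=
  Submodule.orthogonal_inf_orthogonal_sup_inf_le K M

theorem stmt6 (K M : Submodule ℂ E) (hK : IsClosed (K : Set E)) (hM : IsClosed (M : Set E)) :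
    Mᗮ ⊓ sasaki K M ≤ Kᗮ :=
  stmt6_general K M
end

section
/- Let K and M be closed subspaces of a complex Hilbert space E. Then the Sasaki projection admits the decomposition K ∗ M = (K ⊓ M) ⊔ (K ⊓ com(K, M)ᗮ). -/
/-!
For closed `K`, dualising the Sasaki arrow gives `K ∗ M = K ⊓ (K ⊓ Mᗮ)ᗮ`. This contains the
closed subspace `K ⊓ M`, so orthogonal projection onto `K ⊓ M` splits it as `K ⊓ M` plus the
relative orthogonal complement `K ⊓ (K ⊓ M)ᗮ ⊓ (K ⊓ Mᗮ)ᗮ`. The latter is `K ⊓ com(K, M)ᗮ`,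
because the two summands `Kᗮ ⊓ M` and `Kᗮ ⊓ Mᗮ` of the commutator are orthogonal to `K` anyway.
-/

variable {E : Type*} [NormedAddCommGroup E] [InnerProductSpace ℂ E] [CompleteSpace E]

/-- The Sasaki projection `K ∗ M := (K ⇒ Mᗮ)ᗮ`. -/
noncomputable def sproj (K M : Submodule ℂ E) : Submodule ℂ E :=
  (sasaki K Mᗮ)ᗮ

omit [CompleteSpace E] in
theorem sproj_eq_inf_orthogonal (K M : Submodule ℂ E) [K.HasOrthogonalProjection] :
    sproj K M = K ⊓ (K ⊓ Mᗮ)ᗮ := by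
  rw [sproj, sasaki, ← Submodule.inf_orthogonal, Submodule.orthogonal_orthogonal]

omit [CompleteSpace E] in
theorem inf_orthogonal_com (K M : Submodule ℂ E) :
    K ⊓ (com K M)ᗮ = K ⊓ (K ⊓ M)ᗮ ⊓ (K ⊓ Mᗮ)ᗮ := by
  have hKperp : ∀ N : Submodule ℂ E, K ≤ (Kᗮ ⊓ N)ᗮ := fun N =>
    K.le_orthogonal_orthogonal.trans (Submodule.orthogonal_le inf_le_left)
  simp only [com, ← Submodule.inf_orthogonal, ← inf_assoc]
  refine le_antisymm (inf_le_left.trans inf_le_left) (le_inf (le_inf le_rfl ?_) ?_) <;>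
    exact inf_le_left.trans (inf_le_left.trans (hKperp _))

theorem stmt10 (K M : Submodule ℂ E) (hK : IsClosed (K : Set E)) (hM : IsClosed (M : Set E)) :
    sproj K M = (K ⊓ M) ⊔ (K ⊓ (com K M)ᗮ) := by
  have := hK.completeSpace_coe
  have : CompleteSpace (K ⊓ M : Submodule ℂ E) := (hK.inter hM).completeSpace_coe
  have hle : K ⊓ M ≤ K ⊓ (K ⊓ Mᗮ)ᗮ :=
    le_inf inf_le_left <| inf_le_right.trans <|
      M.le_orthogonal_orthogonal.trans (Submodule.orthogonal_le inf_le_right)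
  rw [sproj_eq_inf_orthogonal, inf_orthogonal_com]
  convert (Submodule.sup_orthogonal_inf_of_hasOrthogonalProjection hle).symm using 2
  ac_rfl
end

section
/- Let N be a closed subspace of a complex Hilbert space E and let (M_i)_{i ∈ I} be a family of closed subspaces of E such that P_{M_i} commutes with P_N for every i ∈ I. Then the orthogonal projection onto the topological closure of ⨆_{i} M_i commutes with P_N, and the orthogonal projection onto ⨅_{i} M_i commutes with P_N. -/
variable {E : Type*} [NormedAddCommGroup E] [InnerProductSpace ℂ E] [CompleteSpace E]

/-!
Commuting with the self-adjoint projection `P_N` is equivalent, for the projection onto a closed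
subspace `K`, to `K` being `P_N`-invariant: an idempotent commutes with `T` iff its range and kernel
are `T`-invariant, and for self-adjoint `T` the kernel `Kᗮ` is invariant as soon as `K` is.
Invariant subspaces of a continuous operator are closed under arbitrary joins, meets and
topological closures.
-/

namespace Module.End

variable {R M : Type*} [Semiring R] [AddCommMonoid M] [Module R M]

theorem iSup_mem_invtSubmodule {ι : Sort*} {f : End R M} {p : ι → Submodule R M}
    (hp : ∀ i, p i ∈ f.invtSubmodule) : ⨆ i, p i ∈ f.invtSubmodule := by
  rw [mem_invtSubmodule_iff_map_le, Submodule.map_iSup]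
  exact iSup_mono fun i ↦ (mem_invtSubmodule_iff_map_le f).1 (hp i)

theorem iInf_mem_invtSubmodule {ι : Sort*} {f : End R M} {p : ι → Submodule R M}
    (hp : ∀ i, p i ∈ f.invtSubmodule) : ⨅ i, p i ∈ f.invtSubmodule := by
  rw [mem_invtSubmodule, Submodule.comap_iInf]
  exact iInf_mono fun i ↦ (mem_invtSubmodule f).1 (hp i)

end Module.End

theorem Submodule.commute_starProjection_iff {𝕜 F : Type*} [RCLike 𝕜] [NormedAddCommGroup F]
    [InnerProductSpace 𝕜 F] [CompleteSpace F] (K : Submodule 𝕜 F) [K.HasOrthogonalProjection]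
    {T : F →L[𝕜] F} (hT : IsSelfAdjoint T) :
    Commute K.starProjection T ↔ K ∈ Module.End.invtSubmodule (T : F →ₗ[𝕜] F) := by
  rw [ContinuousLinearMap.IsIdempotentElem.commute_iff K.isIdempotentElem_starProjection,
    K.range_starProjection, K.ker_starProjection, ← ContinuousLinearMap.mem_invtSubmodule_adjoint_iff, hT.adjoint_eq,
    and_self]

theorem commute_proj_iff (K N : Submodule ℂ E) :
    Commute (proj K) (proj N) ↔
      K.topologicalClosure ∈ Module.End.invtSubmodule (proj N : E →ₗ[ℂ] E) :=
  K.topologicalClosure.commute_starProjection_iff (isSelfAdjoint_starProjection _)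

theorem stmt11_general {ι : Type*} (N : Submodule ℂ E) (M : ι → Submodule ℂ E)
    (hM : ∀ i, IsClosed ((M i : Set E)))
    (hcomm : ∀ i, proj (M i) ∘L proj N = proj N ∘L proj (M i)) :
    proj (⨆ i, M i).topologicalClosure ∘L proj N
        = proj N ∘L proj (⨆ i, M i).topologicalClosure ∧
      proj (⨅ i, M i) ∘L proj N = proj N ∘L proj (⨅ i, M i) := by
  have hinv i : M i ∈ Module.End.invtSubmodule (proj N : E →ₗ[ℂ] E) := by
    simpa only [(hM i).submodule_topologicalClosure_eq] using (commute_proj_iff _ _).1 (hcomm i)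
  have hiInf_closed : IsClosed ((⨅ i, M i : Submodule ℂ E) : Set E) := by
    simpa only [Submodule.coe_iInf] using isClosed_iInter hM
  constructor
  · refine (commute_proj_iff _ _).2 ?_
    rw [(Submodule.isClosed_topologicalClosure _).submodule_topologicalClosure_eq]
    exact Submodule.topologicalClosure_mem_invtSubmodule (Module.End.iSup_mem_invtSubmodule hinv)
  · refine (commute_proj_iff _ _).2 ?_
    rw [hiInf_closed.submodule_topologicalClosure_eq]
    exact Module.End.iInf_mem_invtSubmodule hinv

theorem stmt11 {ι : Type*} (N : Submodule ℂ E) (M : ι → Submodule ℂ E)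
    (hN : IsClosed (N : Set E)) (hM : ∀ i, IsClosed ((M i : Set E)))
    (hcomm : ∀ i, proj (M i) ∘L proj N = proj N ∘L proj (M i)) :
    proj (⨆ i, M i).topologicalClosure ∘L proj N
        = proj N ∘L proj (⨆ i, M i).topologicalClosure ∧
      proj (⨅ i, M i) ∘L proj N = proj N ∘L proj (⨅ i, M i) :=
  stmt11_general N M hM hcomm
end
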